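/- arXiv:2605.26657 — 3 statements merged into one kernel-verified Lean document; each statement's English description precedes it below -/
import Mathlib

section
/- Fix a horizon H ≥ 2, a damage rate κ > 0, a reward exponent β ∈ (0,1], and effort levels 0 < e_L < e_H ≤ 1 with κ·H·e_H ≤ 1. Let V(d) = 2^{−(H−1)} ∑_{e ∈ {e_L,e_H}^{H−1}} G_e(d) be the continuation value under the uniform policy, and let ē_β = (e_L^β + e_H^β)/2. Then |V(κ e_H) − V(κ e_L)| ≤ 2(H−1)·ē_β·κ·(e_H − e_L). -/
/-- Continuation return along effort sequence `e` from initial damage `d`. -/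
noncomputable def contReturn (H : ℕ) (κ β : ℝ) (e : ℕ → ℝ) (d : ℝ) : ℝ :=
  ∑ t ∈ Finset.range (H - 1),
    (e t) ^ β * (1 - (d + κ * ∑ s ∈ Finset.range t, e s)) ^ 2

/-- Uniform-policy continuation value: the average of `contReturn` over all
`2^(H-1)` effort sequences with values in `{eL, eH}`, encoded by
`c : Fin (H-1) → Bool` (`true ↦ eH`, `false ↦ eL`). -/
noncomputable def contValue (H : ℕ) (κ β eL eH : ℝ) (d : ℝ) : ℝ :=
  (2 : ℝ) ^ (-((H : ℤ) - 1)) *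
    ∑ c : Fin (H - 1) → Bool,
      contReturn H κ β
        (fun t => if ht : t < H - 1 then (if c ⟨t, ht⟩ then eH else eL) else 0) d

/-!
The reward `e^β (1 - D)^2` is `2 e^β`-Lipschitz in the damage `D` while `D` stays in `[0, 1]`,
and shifting the initial damage shifts every later damage by the same amount. Hence each
continuation return moves by at most `2 (d₁ - d₀) ∑ₜ eₜ^β`. Averaging over the uniform policy,
each effort `eₜ` equals `e_L` and `e_H` for exactly half of the sequences, so the average of
`∑ₜ eₜ^β` is `(H - 1) ē_β`.
-/

open Finset

lemma abs_one_sub_sq_sub_one_sub_sq_le {a b : ℝ} (h₀ : 0 ≤ a + b) (h₂ : a + b ≤ 2) :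
    |(1 - a) ^ 2 - (1 - b) ^ 2| ≤ 2 * |a - b| := by
  rw [show (1 - a) ^ 2 - (1 - b) ^ 2 = (b - a) * (2 - a - b) by ring, abs_mul, abs_sub_comm,
    mul_comm 2]
  exact mul_le_mul_of_nonneg_left (abs_le.2 ⟨by linarith, by linarith⟩) (abs_nonneg _)

lemma abs_contReturn_sub_le {H : ℕ} {κ β d₀ d₁ : ℝ} {e : ℕ → ℝ} (hκ : 0 ≤ κ)
    (he : ∀ t < H - 1, 0 ≤ e t) (hd₀ : 0 ≤ d₀) (hd : d₀ ≤ d₁)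
    (hD : ∀ t < H - 1, d₁ + κ * ∑ s ∈ range t, e s ≤ 1) :
    |contReturn H κ β e d₁ - contReturn H κ β e d₀| ≤
      2 * (d₁ - d₀) * ∑ t ∈ range (H - 1), e t ^ β := by
  rw [contReturn, contReturn, ← sum_sub_distrib, mul_sum]
  refine (abs_sum_le_sum_abs _ _).trans (sum_le_sum fun t ht => ?_)
  rw [mem_range] at ht
  have hS : 0 ≤ κ * ∑ s ∈ range t, e s :=
    mul_nonneg hκ (sum_nonneg fun s hs => he s ((mem_range.1 hs).trans ht))
  have hsq := abs_one_sub_sq_sub_one_sub_sq_le (a := d₁ + κ * ∑ s ∈ range t, e s)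
    (b := d₀ + κ * ∑ s ∈ range t, e s) (by linarith) (by linarith [hD t ht])
  rw [add_sub_add_right_eq_sub, abs_of_nonneg (sub_nonneg.2 hd)] at hsq
  rw [← mul_sub, abs_mul, abs_of_nonneg (Real.rpow_nonneg (he t ht) β)]
  calc e t ^ β * |_| ≤ e t ^ β * (2 * (d₁ - d₀)) :=
        mul_le_mul_of_nonneg_left hsq (Real.rpow_nonneg (he t ht) β)
    _ = 2 * (d₁ - d₀) * e t ^ β := mul_comm _ _

noncomputable def boolEffort {n : ℕ} (eL eH : ℝ) (c : Fin n → Bool) (t : ℕ) : ℝ :=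
  if ht : t < n then (if c ⟨t, ht⟩ then eH else eL) else 0

lemma contValue_eq_boolEffort (H : ℕ) (κ β eL eH d : ℝ) :
    contValue H κ β eL eH d =
      (2 : ℝ) ^ (-((H : ℤ) - 1)) * ∑ c : Fin (H - 1) → Bool,
        contReturn H κ β (boolEffort eL eH c) d :=
  rfl

section boolEffort

variable {n : ℕ} {eL eH : ℝ}

lemma boolEffort_nonneg (c : Fin n → Bool) (t : ℕ) (heL : 0 ≤ eL) (hLH : eL ≤ eH) :
    0 ≤ boolEffort eL eH c t := by
  unfold boolEffort
  split_ifs <;> linarith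

lemma boolEffort_le (c : Fin n → Bool) (t : ℕ) (heL : 0 ≤ eL) (hLH : eL ≤ eH) :
    boolEffort eL eH c t ≤ eH := by
  unfold boolEffort
  split_ifs <;> linarith

lemma average_boolEffort_rpow {t : ℕ} (ht : t < n) (β : ℝ) :
    (2 : ℝ) ^ (-(n : ℤ)) * ∑ c : Fin n → Bool, boolEffort eL eH c t ^ β =
      (eL ^ β + eH ^ β) / 2 := by
  have hsum := Fintype.sum_piFinset_apply (fun b : Bool => (if b then eH else eL) ^ β)
    univ (⟨t, ht⟩ : Fin n)
  simp only [Fintype.piFinset_univ, Fintype.sum_bool, if_true, Bool.false_eq_true, if_false,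
    card_univ, Fintype.card_bool, Fintype.card_fin, nsmul_eq_mul, Nat.cast_pow,
    Nat.cast_ofNat] at hsum
  simp only [boolEffort, dif_pos ht, hsum]
  obtain ⟨m, rfl⟩ : ∃ m, n = m + 1 := ⟨n - 1, by omega⟩
  rw [Nat.add_sub_cancel, Nat.cast_succ, neg_add, zpow_add₀ two_ne_zero, zpow_neg,
    zpow_natCast]
  field_simp
  ring

end boolEffort

theorem abs_contValue_sub_le {H : ℕ} (hH : 1 ≤ H) {κ β eL eH d₀ d₁ : ℝ} (hκ : 0 ≤ κ)
    (heL : 0 ≤ eL) (hLH : eL ≤ eH) (hd₀ : 0 ≤ d₀) (hd : d₀ ≤ d₁)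
    (hD : d₁ + κ * ((H : ℝ) - 2) * eH ≤ 1) :
    |contValue H κ β eL eH d₁ - contValue H κ β eL eH d₀| ≤
      2 * (d₁ - d₀) * ((H : ℝ) - 1) * ((eL ^ β + eH ^ β) / 2) := by
  have hzpow : (H : ℤ) - 1 = ((H - 1 : ℕ) : ℤ) := by omega
  have hpos : (0 : ℝ) < 2 ^ (-((H - 1 : ℕ) : ℤ)) := by positivity
  have hstep : ∀ c : Fin (H - 1) → Bool,
      |contReturn H κ β (boolEffort eL eH c) d₁ - contReturn H κ β (boolEffort eL eH c) d₀| ≤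
        2 * (d₁ - d₀) * ∑ t ∈ range (H - 1), boolEffort eL eH c t ^ β := by
    intro c
    refine abs_contReturn_sub_le hκ (fun t _ => boolEffort_nonneg c t heL hLH) hd₀ hd
      fun t ht => ?_
    have hsum : ∑ s ∈ range t, boolEffort eL eH c s ≤ t * eH :=
      (sum_le_sum fun s _ => boolEffort_le c s heL hLH).trans_eq (by simp)
    have ht' : (t : ℝ) ≤ H - 2 := by
      rw [le_sub_iff_add_le]; exact_mod_cast (by omega : t + 2 ≤ H)
    nlinarith [mul_le_mul_of_nonneg_left ht' (mul_nonneg hκ (heL.trans hLH))]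
  rw [contValue_eq_boolEffort, contValue_eq_boolEffort, hzpow, ← mul_sub, ← sum_sub_distrib,
    abs_mul, abs_of_pos hpos]
  calc _ ≤ 2 ^ (-((H - 1 : ℕ) : ℤ)) * ∑ c : Fin (H - 1) → Bool,
          2 * (d₁ - d₀) * ∑ t ∈ range (H - 1), boolEffort eL eH c t ^ β :=
        mul_le_mul_of_nonneg_left ((abs_sum_le_sum_abs _ _).trans (sum_le_sum fun c _ => hstep c))
          hpos.le
    _ = 2 * (d₁ - d₀) * ∑ t ∈ range (H - 1),
          2 ^ (-((H - 1 : ℕ) : ℤ)) * ∑ c : Fin (H - 1) → Bool, boolEffort eL eH c t ^ β := by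
        rw [← mul_sum, sum_comm, mul_left_comm, mul_sum]
    _ = 2 * (d₁ - d₀) * ((H : ℝ) - 1) * ((eL ^ β + eH ^ β) / 2) := by
        rw [sum_congr rfl fun t ht => average_boolEffort_rpow (mem_range.1 ht) β, sum_const,
          card_range, nsmul_eq_mul, Nat.cast_sub hH, Nat.cast_one]
        ring

theorem stmt_1_general (H : ℕ) (hH : 2 ≤ H) (κ β eL eH : ℝ)
    (hκ : 0 < κ)
    (heL : 0 < eL) (hLH : eL < eH)
    (hbound : κ * (H : ℝ) * eH ≤ 1) :
    |contValue H κ β eL eH (κ * eH) - contValue H κ β eL eH (κ * eL)| ≤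
      2 * ((H : ℝ) - 1) * ((eL ^ β + eH ^ β) / 2) * κ * (eH - eL) := by
  have hD : κ * eH + κ * ((H : ℝ) - 2) * eH ≤ 1 := by
    nlinarith [mul_pos hκ (heL.trans hLH)]
  calc _ ≤ 2 * (κ * eH - κ * eL) * ((H : ℝ) - 1) * ((eL ^ β + eH ^ β) / 2) :=
        abs_contValue_sub_le (by omega) hκ.le heL.le hLH.le (by positivity)
          (mul_le_mul_of_nonneg_left hLH.le hκ.le) hD
    _ = _ := by ring

theorem stmt_1 (H : ℕ) (hH : 2 ≤ H) (κ β eL eH : ℝ)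
    (hκ : 0 < κ) (hβ0 : 0 < β) (hβ1 : β ≤ 1)
    (heL : 0 < eL) (hLH : eL < eH) (heH : eH ≤ 1)
    (hbound : κ * (H : ℝ) * eH ≤ 1) :
    |contValue H κ β eL eH (κ * eH) - contValue H κ β eL eH (κ * eL)| ≤
      2 * ((H : ℝ) - 1) * ((eL ^ β + eH ^ β) / 2) * κ * (eH - eL) :=
  stmt_1_general H hH κ β eL eH hκ heL hLH hbound
end

section
/- Fix a horizon H ≥ 2, a damage rate κ > 0, a reward exponent β ∈ (0,1], and effort levels 0 < e_L < e_H ≤ 1 with κ·H·e_H ≤ 1. Define the state-action value at zero damage by Q(e) = e^β + V(κ e), where V is the uniform-policy continuation value. Then Q(e_H) − Q(e_L) ≥ (e_H^β − e_L^β) − 2(H−1)·κ·ē_β·(e_H − e_L), where ē_β = (e_L^β + e_H^β)/2. -/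
/-- State-action value at zero damage: `Q(e) = e^β + V(κ e)`. -/
noncomputable def Qval (H : ℕ) (κ β eL eH : ℝ) (e : ℝ) : ℝ :=
  e ^ β + contValue H κ β eL eH (κ * e)

lemma sum_bool_apply {n : ℕ} (i : Fin n) (f : Bool → ℝ) :
    ∑ c : Fin n → Bool, f (c i) = 2 ^ (n - 1) * (f false + f true) := by
  rw [← Equiv.sum_comp (Equiv.funSplitAt i Bool).symm (fun c => f (c i))]
  simp only [Equiv.funSplitAt_symm_apply, dif_pos rfl]
  rw [Fintype.sum_prod_type]
  simp only [dite_true, Finset.sum_const, Finset.card_univ, Fintype.card_fun,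
    Fintype.card_bool, nsmul_eq_mul]
  have hcard : Fintype.card {j : Fin n // j ≠ i} = n - 1 := by
    simp [Fintype.card_subtype_compl]
  rw [hcard, Fintype.sum_bool]
  push_cast
  ring

theorem stmt_2 (H : ℕ) (hH : 2 ≤ H) (κ β eL eH : ℝ)
    (hκ : 0 < κ) (hβ0 : 0 < β) (hβ1 : β ≤ 1)
    (heL : 0 < eL) (hLH : eL < eH) (heH : eH ≤ 1)
    (hbound : κ * (H : ℝ) * eH ≤ 1) :
    Qval H κ β eL eH eH - Qval H κ β eL eH eL ≥
      (eH ^ β - eL ^ β) -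
        2 * ((H : ℝ) - 1) * κ * ((eL ^ β + eH ^ β) / 2) * (eH - eL) := by
  set n := H - 1 with hn
  have hn1 : 1 ≤ n := by omega
  have hcastn : (n : ℝ) = (H : ℝ) - 1 := by
    rw [hn]; push_cast [Nat.cast_sub (by omega : 1 ≤ H)]; ring
  set ec : (Fin n → Bool) → ℕ → ℝ :=
    fun c t => if ht : t < n then (if c ⟨t, ht⟩ then eH else eL) else 0 with hec
  -- basic bounds on efforts
  have hecb : ∀ c t, t < n → eL ≤ ec c t ∧ ec c t ≤ eH := by
    intro c t ht
    simp only [hec, dif_pos ht]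
    split <;> constructor <;> linarith
  -- per-sequence lemma
  have key1 : ∀ c : Fin n → Bool,
      contReturn H κ β (ec c) (κ * eH) - contReturn H κ β (ec c) (κ * eL) ≥
        ∑ t ∈ Finset.range n, (-(2 * κ * (eH - eL))) * (ec c t) ^ β := by
    intro c
    unfold contReturn
    rw [← Finset.sum_sub_distrib]
    apply Finset.sum_le_sum
    intro t ht
    have htn : t < n := Finset.mem_range.mp ht
    obtain ⟨heL', heH'⟩ := hecb c t htn
    have he0 : 0 < ec c t := lt_of_lt_of_le heL heL'
    have hg : (0:ℝ) ≤ (ec c t) ^ β := Real.rpow_nonneg he0.le β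
    set S := ∑ s ∈ Finset.range t, ec c s with hS
    have hS0 : 0 ≤ S := by
      apply Finset.sum_nonneg
      intro s hs
      have hsn : s < n := by
        have := Finset.mem_range.mp hs; omega
      exact le_trans heL.le (hecb c s hsn).1
    have hSle : S ≤ t * eH := by
      calc S ≤ ∑ s ∈ Finset.range t, eH := by
              apply Finset.sum_le_sum
              intro s hs
              have hsn : s < n := by have := Finset.mem_range.mp hs; omega
              exact (hecb c s hsn).2
        _ = t * eH := by simp [mul_comm]
    have htH : (t : ℝ) + 1 ≤ H := by
      have : t + 1 ≤ H := by omega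
      exact_mod_cast this
    have heH0 : (0:ℝ) ≤ eH := by linarith
    have hA : 0 ≤ 1 - (κ * eH + κ * S) := by
      nlinarith [mul_le_mul_of_nonneg_left hSle hκ.le,
        mul_le_mul_of_nonneg_right (mul_le_mul_of_nonneg_left htH hκ.le) heH0]
    have hB1 : 1 - (κ * eL + κ * S) ≤ 1 := by nlinarith
    have hAB : 1 - (κ * eH + κ * S) ≤ 1 - (κ * eL + κ * S) := by nlinarith
    have hq : (1 - (κ * eH + κ * S)) ^ 2 - (1 - (κ * eL + κ * S)) ^ 2 ≥
        -(2 * κ * (eH - eL)) := by nlinarith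
    have := mul_le_mul_of_nonneg_left hq hg
    nlinarith [this]
  -- sum identity
  have key2 : ∑ c : Fin n → Bool, ∑ t ∈ Finset.range n, (ec c t) ^ β =
      (n : ℝ) * 2 ^ (n - 1) * (eL ^ β + eH ^ β) := by
    rw [Finset.sum_comm]
    have : ∀ t ∈ Finset.range n,
        ∑ c : Fin n → Bool, (ec c t) ^ β = 2 ^ (n - 1) * (eL ^ β + eH ^ β) := by
      intro t ht
      have htn : t < n := Finset.mem_range.mp ht
      have : ∀ c : Fin n → Bool, (ec c t) ^ β =
          (fun b : Bool => if b then eH ^ β else eL ^ β) (c ⟨t, htn⟩) := by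
        intro c
        simp only [hec, dif_pos htn]
        split <;> rfl
      rw [Finset.sum_congr rfl (fun c _ => this c),
        sum_bool_apply ⟨t, htn⟩ (fun b => if b then eH ^ β else eL ^ β)]
      simp
    rw [Finset.sum_congr rfl this, Finset.sum_const, Finset.card_range, nsmul_eq_mul]
    ring
  -- assemble
  have hz : (-((H : ℤ) - 1)) = -(n : ℤ) := by
    rw [hn]; push_cast [Nat.cast_sub (by omega : 1 ≤ H)]; ring
  have hpow : (0:ℝ) < (2:ℝ) ^ (-(n : ℤ)) := by positivity
  have hVdiff : contValue H κ β eL eH (κ * eH) - contValue H κ β eL eH (κ * eL) ≥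
      -(2 * ((H:ℝ) - 1) * κ * ((eL ^ β + eH ^ β) / 2) * (eH - eL)) := by
    unfold contValue
    rw [hz, ← mul_sub, ← Finset.sum_sub_distrib]
    have h1 : ∑ c : Fin n → Bool,
        (contReturn H κ β (ec c) (κ * eH) - contReturn H κ β (ec c) (κ * eL)) ≥
        ∑ c : Fin n → Bool, ∑ t ∈ Finset.range n, (-(2 * κ * (eH - eL))) * (ec c t) ^ β := by
      exact Finset.sum_le_sum (fun c _ => key1 c)
    have h2 : ∑ c : Fin n → Bool, ∑ t ∈ Finset.range n,
        (-(2 * κ * (eH - eL))) * (ec c t) ^ β =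
        -(2 * κ * (eH - eL)) * ((n : ℝ) * 2 ^ (n - 1) * (eL ^ β + eH ^ β)) := by
      rw [← key2]
      rw [Finset.mul_sum]
      congr 1; ext c; rw [Finset.mul_sum]
    have h3 := mul_le_mul_of_nonneg_left (h2 ▸ h1) hpow.le
    refine le_trans (le_of_eq ?_) h3
    have hhalf : (2:ℝ) ^ (-(n : ℤ)) * 2 ^ (n - 1) = 1 / 2 := by
      rw [zpow_neg, zpow_natCast]
      have h2n : (2:ℝ) ^ n = 2 ^ (n - 1) * 2 := by
        rw [← pow_succ]; congr 1; omega
      rw [h2n]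
      have : (2:ℝ) ^ (n-1) ≠ 0 := by positivity
      field_simp
    have : (2:ℝ) ^ (-(n : ℤ)) * (-(2 * κ * (eH - eL)) * ((n : ℝ) * 2 ^ (n - 1) * (eL ^ β + eH ^ β))) =
        ((2:ℝ) ^ (-(n : ℤ)) * 2 ^ (n - 1)) * (-(2 * κ * (eH - eL)) * ((n : ℝ) * (eL ^ β + eH ^ β))) := by
      ring
    rw [this, hhalf, ← hcastn]
    ring
  unfold Qval
  linarith [hVdiff]
end

section
/- (Step-0 commitment, gradient form.) Fix a horizon H ≥ 2, a damage rate κ > 0, a reward exponent β ∈ (0,1], and effort levels 0 < e_L < e_H ≤ 1 with κ·H·e_H ≤ 1. Suppose the commitment condition e_H^β − e_L^β > 2(H−1)·κ·ē_β·(e_H − e_L) holds, where ē_β = (e_L^β + e_H^β)/2. Define J(θ) = σ(θ)·Q(e_H) + (1 − σ(θ))·Q(e_L), where σ is the logistic sigmoid and Q(e) = e^β + V(κe) with V the uniform-policy continuation value. Then the derivative of J at θ = 0 is strictly positive. -/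
/-- The logistic sigmoid `σ(θ) = 1 / (1 + exp(-θ))`. -/
noncomputable def sigmoid (θ : ℝ) : ℝ := 1 / (1 + Real.exp (-θ))

/-!
Since `σ'(0) = 1/4`, the derivative of `J` at `0` is `(Q(e_H) - Q(e_L)) / 4`, so it suffices to
show `Q(e_H) > Q(e_L)`. Starting from the larger damage `κ e_H` instead of `κ e_L` costs, at
step `t` of any effort sequence, at most `e_t^β · 2κ(e_H - e_L)`, because
`(1 - u)² - (1 - v)² ≤ 2(v - u)` for `0 ≤ u ≤ v`. Averaged over the uniform policy each
`e_t^β` becomes `ē_β`, so `V(κ e_L) - V(κ e_H) ≤ 2(H - 1)κ ē_β (e_H - e_L)`, which the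
commitment condition makes smaller than the immediate gain `e_H^β - e_L^β`.
-/

open Finset

theorem Fintype.card_smul_sum_comp_eval {ι α M : Type*} [DecidableEq ι] [Fintype ι] [Fintype α]
    [AddCommMonoid M] (i : ι) (f : α → M) :
    Fintype.card α • ∑ c : ι → α, f (c i) = Fintype.card (ι → α) • ∑ a, f a := by
  rw [← Fintype.sum_equiv (Equiv.piSplitAt i _).symm (fun p => f p.1) _ (fun _ => by simp),
    Fintype.sum_prod_type, Fintype.card_congr (Equiv.piSplitAt i _), Fintype.card_prod, mul_smul]
  simp only [sum_const, card_univ, ← smul_sum]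

theorem hasDerivAt_sigmoid (θ : ℝ) : HasDerivAt sigmoid (sigmoid θ * (1 - sigmoid θ)) θ := by
  have hden : HasDerivAt (fun x => 1 + Real.exp (-x)) (-Real.exp (-θ)) θ := by
    simpa using (hasDerivAt_neg θ).exp.const_add 1
  have hσ : sigmoid = (fun x => 1 + Real.exp (-x))⁻¹ := by
    funext
    simp [sigmoid]
  have hpos : 1 + Real.exp (-θ) ≠ 0 := by positivity
  rw [hσ]
  refine (hden.inv hpos).congr_deriv ?_
  simp only [Pi.inv_apply]
  field_simp
  ring

theorem sigmoid_zero : sigmoid 0 = 1 / 2 := by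
  norm_num [sigmoid]

theorem hasDerivAt_sigmoid_mix (a b θ : ℝ) :
    HasDerivAt (fun θ => sigmoid θ * a + (1 - sigmoid θ) * b)
      (sigmoid θ * (1 - sigmoid θ) * (a - b)) θ := by
  refine ((hasDerivAt_sigmoid θ).mul_const a |>.add
    (((hasDerivAt_const θ 1).sub (hasDerivAt_sigmoid θ)).mul_const b)).congr_deriv ?_
  ring

theorem one_sub_sq_sub_one_sub_sq_le {u v : ℝ} (hu : 0 ≤ u) (huv : u ≤ v) :
    (1 - u) ^ 2 - (1 - v) ^ 2 ≤ 2 * (v - u) := by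
  nlinarith

theorem contReturn_sub_contReturn_le {H : ℕ} {κ β d d' : ℝ} {e : ℕ → ℝ} (hκ : 0 ≤ κ)
    (he : ∀ t, 0 ≤ e t) (hd : 0 ≤ d) (hdd' : d ≤ d') :
    contReturn H κ β e d - contReturn H κ β e d' ≤
      2 * (d' - d) * ∑ t ∈ range (H - 1), e t ^ β := by
  rw [contReturn, contReturn, ← sum_sub_distrib, mul_sum]
  refine sum_le_sum fun t _ => ?_
  have hS : 0 ≤ κ * ∑ s ∈ range t, e s := mul_nonneg hκ (sum_nonneg fun s _ => he s)
  rw [← mul_sub, mul_comm (2 * (d' - d))]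
  refine mul_le_mul_of_nonneg_left ?_ (Real.rpow_nonneg (he t) β)
  refine (one_sub_sq_sub_one_sub_sq_le (add_nonneg hd hS) (add_le_add_left hdd' _)).trans_eq ?_
  ring

noncomputable def effortSeq (H : ℕ) (eL eH : ℝ) (c : Fin (H - 1) → Bool) (t : ℕ) : ℝ :=
  if ht : t < H - 1 then (if c ⟨t, ht⟩ then eH else eL) else 0

theorem contValue_eq (H : ℕ) (κ β eL eH d : ℝ) :
    contValue H κ β eL eH d =
      (2 : ℝ) ^ (-((H : ℤ) - 1)) * ∑ c, contReturn H κ β (effortSeq H eL eH c) d :=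
  rfl

theorem effortSeq_nonneg {H : ℕ} {eL eH : ℝ} (heL : 0 ≤ eL) (hLH : eL ≤ eH)
    (c : Fin (H - 1) → Bool) (t : ℕ) : 0 ≤ effortSeq H eL eH c t := by
  unfold effortSeq
  split_ifs <;> linarith

theorem sum_effortSeq_rpow {H t : ℕ} (ht : t < H - 1) (eL eH β : ℝ) :
    ∑ c, effortSeq H eL eH c t ^ β = 2 ^ (H - 1) * ((eL ^ β + eH ^ β) / 2) := by
  have h := Fintype.card_smul_sum_comp_eval (⟨t, ht⟩ : Fin (H - 1)) fun b : Bool => (if b then eH else eL) ^ β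
  simp only [Fintype.card_bool, Fintype.card_fun, Fintype.card_fin, nsmul_eq_mul,
    Fintype.sum_bool] at h
  simp only [effortSeq, dif_pos ht]
  push_cast at h
  linarith

theorem contValue_sub_contValue_le {H : ℕ} (hH : 1 ≤ H) {κ β eL eH d d' : ℝ} (hκ : 0 ≤ κ)
    (heL : 0 ≤ eL) (hLH : eL ≤ eH) (hd : 0 ≤ d) (hdd' : d ≤ d') :
    contValue H κ β eL eH d - contValue H κ β eL eH d' ≤
      2 * ((H : ℝ) - 1) * (d' - d) * ((eL ^ β + eH ^ β) / 2) := by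
  have hpow : (2 : ℝ) ^ (-((H : ℤ) - 1)) * 2 ^ (H - 1) = 1 := by
    rw [show (H : ℤ) - 1 = ((H - 1 : ℕ) : ℤ) by omega, zpow_neg, zpow_natCast]
    exact inv_mul_cancel₀ (by positivity)
  rw [contValue_eq, contValue_eq, ← mul_sub, ← sum_sub_distrib]
  calc (2 : ℝ) ^ (-((H : ℤ) - 1)) * ∑ c, (contReturn H κ β (effortSeq H eL eH c) d -
          contReturn H κ β (effortSeq H eL eH c) d')
      ≤ (2 : ℝ) ^ (-((H : ℤ) - 1)) *
          ∑ c, 2 * (d' - d) * ∑ t ∈ range (H - 1), effortSeq H eL eH c t ^ β := by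
        gcongr with c
        exact contReturn_sub_contReturn_le hκ (effortSeq_nonneg heL hLH c) hd hdd'
    _ = (2 : ℝ) ^ (-((H : ℤ) - 1)) * (2 * (d' - d) *
          ∑ _t ∈ range (H - 1), 2 ^ (H - 1) * ((eL ^ β + eH ^ β) / 2)) := by
        rw [← mul_sum, sum_comm]
        congr 2
        exact sum_congr rfl fun t ht => sum_effortSeq_rpow (mem_range.mp ht) eL eH β
    _ = 2 * ((H : ℝ) - 1) * (d' - d) * ((eL ^ β + eH ^ β) / 2) := by
        rw [sum_const, card_range, nsmul_eq_mul, Nat.cast_sub hH, Nat.cast_one]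
        linear_combination (2 * ((H : ℝ) - 1) * (d' - d) * ((eL ^ β + eH ^ β) / 2)) * hpow

theorem stmt_5_general (H : ℕ) (hH : 2 ≤ H) (κ β eL eH : ℝ)
    (hκ : 0 < κ)
    (heL : 0 < eL) (hLH : eL < eH)
    (hcommit : eH ^ β - eL ^ β >
      2 * ((H : ℝ) - 1) * κ * ((eL ^ β + eH ^ β) / 2) * (eH - eL)) :
    0 < deriv (fun θ : ℝ =>
      sigmoid θ * Qval H κ β eL eH eH + (1 - sigmoid θ) * Qval H κ β eL eH eL) 0 := by
  have hV := contValue_sub_contValue_le (H := H) (β := β) (by omega) hκ.le heL.le hLH.le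
    (mul_nonneg hκ.le heL.le) (mul_le_mul_of_nonneg_left hLH.le hκ.le)
  have hQ : Qval H κ β eL eH eL < Qval H κ β eL eH eH := by
    unfold Qval
    linarith
  rw [(hasDerivAt_sigmoid_mix _ _ 0).deriv, sigmoid_zero]
  linarith

theorem stmt_5 (H : ℕ) (hH : 2 ≤ H) (κ β eL eH : ℝ)
    (hκ : 0 < κ) (hβ0 : 0 < β) (hβ1 : β ≤ 1)
    (heL : 0 < eL) (hLH : eL < eH) (heH : eH ≤ 1)
    (hbound : κ * (H : ℝ) * eH ≤ 1)
    (hcommit : eH ^ β - eL ^ β >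
      2 * ((H : ℝ) - 1) * κ * ((eL ^ β + eH ^ β) / 2) * (eH - eL)) :
    0 < deriv (fun θ : ℝ =>
      sigmoid θ * Qval H κ β eL eH eH + (1 - sigmoid θ) * Qval H κ β eL eH eL) 0 :=
  stmt_5_general H hH κ β eL eH hκ heL hLH hcommit
end
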